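/- Define u : ℝ × [0,1) → ℝ by u(x,t) = (exp(x+t−1) − 1)·𝟙_{{x+t>1}} + (exp(−x+t−1) − 1)·𝟙_{{−x+t>1}}. Then for every t ∈ [0,1): (a) the sets {x : x+t > 1} and {x : −x+t > 1} are disjoint and u(·,t) ≥ 0 with {x : u(x,t) > 0} = {x : x > 1−t} ∪ {x : x < t−1}; (b) u is C^∞ on the open set {(x,t) : u(x,t) > 0, 0 < t < 1} and satisfies the heat equation ∂ₓₓu − ∂ₜu = 0 there; and (c) at each free boundary point, i.e. for x₀ = 1−t or x₀ = −(1−t) with t ∈ (0,1), the limit of |∂ₓu(x,t)| as (x,t) → (x₀,t) from within {u>0} equals 1. -/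

import Mathlib

open Set Filter Topology

noncomputable section

namespace ParabolicBernoulli

/-- The two colliding traveling waves
`u(x,t) = 𝟙_{x+t>1}(exp(x+t-1)-1) + 𝟙_{-x+t>1}(exp(-x+t-1)-1)`. -/
def uEx : ℝ × ℝ → ℝ := fun p =>
  (if 1 < p.1 + p.2 then Real.exp (p.1 + p.2 - 1) - 1 else 0) +
    (if 1 < -p.1 + p.2 then Real.exp (-p.1 + p.2 - 1) - 1 else 0)

/-- The open region where `u > 0` and `0 < t < 1`. -/
def DEx : Set (ℝ × ℝ) := {p : ℝ × ℝ | 0 < uEx p ∧ 0 < p.2 ∧ p.2 < 1}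

/-!
For `t < 1` the supports `{x + t > 1}` and `{-x + t > 1}` of the two waves are separated, so near
every point of `{u > 0}` the function `u` coincides with a single smooth wave
`exp (c x + t - 1) - 1`, `c = ±1`. Such a wave solves the heat equation because `c² = 1`, and its
`x`-derivative `c exp (c x + t - 1)` has modulus `exp 0 = 1` on its free boundary `c x + t = 1`.
-/

def waveProfile (s : ℝ) : ℝ := if 1 < s then Real.exp (s - 1) - 1 else 0

lemma waveProfile_nonneg (s : ℝ) : 0 ≤ waveProfile s := by
  unfold waveProfile
  split_ifs with hs
  · linarith [Real.add_one_le_exp (s - 1)]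
  · rfl

lemma waveProfile_pos_iff (s : ℝ) : 0 < waveProfile s ↔ 1 < s := by
  unfold waveProfile
  split_ifs with hs <;> simp [hs]

/-- The reflection `x ↦ -x` swaps the two waves, so either sign may be put first. -/
lemma uEx_eq_waveProfile_add {c : ℝ} (hc : c = 1 ∨ c = -1) (q : ℝ × ℝ) :
    uEx q = waveProfile (c * q.1 + q.2) + waveProfile (-c * q.1 + q.2) := by
  rcases hc with rfl | rfl <;> simp [uEx, waveProfile, add_comm]

lemma uEx_nonneg (q : ℝ × ℝ) : 0 ≤ uEx q := by
  rw [uEx_eq_waveProfile_add (Or.inl rfl)]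
  exact add_nonneg (waveProfile_nonneg _) (waveProfile_nonneg _)

lemma uEx_pos_iff {c : ℝ} (hc : c = 1 ∨ c = -1) (q : ℝ × ℝ) :
    0 < uEx q ↔ 1 < c * q.1 + q.2 ∨ 1 < -c * q.1 + q.2 := by
  rw [uEx_eq_waveProfile_add hc, ← waveProfile_pos_iff, ← waveProfile_pos_iff]
  have := waveProfile_nonneg (c * q.1 + q.2)
  have := waveProfile_nonneg (-c * q.1 + q.2)
  constructor
  · intro h
    by_contra! h'
    linarith
  · rintro (h | h) <;> linarith

def wave (c : ℝ) (q : ℝ × ℝ) : ℝ := Real.exp (c * q.1 + q.2 - 1) - 1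

def waveRegion (c : ℝ) : Set (ℝ × ℝ) := {q | 1 < c * q.1 + q.2 ∧ q.2 < 1}

lemma isOpen_waveRegion (c : ℝ) : IsOpen (waveRegion c) :=
  (isOpen_lt continuous_const (by fun_prop : Continuous fun q : ℝ × ℝ => c * q.1 + q.2)).inter
    (isOpen_lt continuous_snd continuous_const)

lemma uEx_eq_wave {c : ℝ} (hc : c = 1 ∨ c = -1) {q : ℝ × ℝ} (hq : q ∈ waveRegion c) :
    uEx q = wave c q := by
  obtain ⟨hpos, ht⟩ := hq
  have hoff : ¬ 1 < -c * q.1 + q.2 := by linarith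
  rw [uEx_eq_waveProfile_add hc, waveProfile, waveProfile, if_pos hpos, if_neg hoff, add_zero]
  rfl

lemma uEx_eventuallyEq_wave {c : ℝ} (hc : c = 1 ∨ c = -1) {p : ℝ × ℝ}
    (hp : p ∈ waveRegion c) : uEx =ᶠ[𝓝 p] wave c :=
  eventually_of_mem ((isOpen_waveRegion c).mem_nhds hp) fun _ hq => uEx_eq_wave hc hq

lemma exists_mem_waveRegion {q : ℝ × ℝ} (hu : 0 < uEx q) (ht : q.2 < 1) :
    ∃ c : ℝ, (c = 1 ∨ c = -1) ∧ q ∈ waveRegion c := by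
  rcases (uEx_pos_iff (Or.inl rfl) q).mp hu with h | h
  · exact ⟨1, Or.inl rfl, h, ht⟩
  · exact ⟨-1, Or.inr rfl, h, ht⟩

lemma hasFDerivAt_exp_phase (c : ℝ) (q : ℝ × ℝ) :
    HasFDerivAt (fun q : ℝ × ℝ => Real.exp (c * q.1 + q.2 - 1))
      (Real.exp (c * q.1 + q.2 - 1) •
        (c • ContinuousLinearMap.fst ℝ ℝ ℝ + ContinuousLinearMap.snd ℝ ℝ ℝ)) q :=
  (((hasFDerivAt_fst.const_smul c).add hasFDerivAt_snd).sub_const 1).exp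

lemma hasFDerivAt_wave (c : ℝ) (q : ℝ × ℝ) :
    HasFDerivAt (wave c)
      (Real.exp (c * q.1 + q.2 - 1) •
        (c • ContinuousLinearMap.fst ℝ ℝ ℝ + ContinuousLinearMap.snd ℝ ℝ ℝ)) q :=
  (hasFDerivAt_exp_phase c q).sub_const 1

lemma contDiff_wave (c : ℝ) : ContDiff ℝ (⊤ : ℕ∞) (wave c) := by
  unfold wave
  fun_prop

lemma fderiv_uEx_apply {c : ℝ} (hc : c = 1 ∨ c = -1) {q : ℝ × ℝ} (hq : q ∈ waveRegion c)
    (v : ℝ × ℝ) : fderiv ℝ uEx q v = Real.exp (c * q.1 + q.2 - 1) * (c * v.1 + v.2) := by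
  rw [(uEx_eventuallyEq_wave hc hq).fderiv_eq, (hasFDerivAt_wave c q).fderiv]
  simp only [smul_apply, add_apply, ContinuousLinearMap.coe_fst', ContinuousLinearMap.coe_snd',
    smul_eq_mul]

lemma heat_equation_uEx {c : ℝ} (hc : c = 1 ∨ c = -1) {p : ℝ × ℝ} (hp : p ∈ waveRegion c) :
    fderiv ℝ (fun q : ℝ × ℝ => fderiv ℝ uEx q (1, 0)) p (1, 0) - fderiv ℝ uEx p (0, 1) = 0 := by
  have hux : (fun q : ℝ × ℝ => fderiv ℝ uEx q (1, 0)) =ᶠ[𝓝 p]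
      fun q => c * Real.exp (c * q.1 + q.2 - 1) :=
    eventually_of_mem ((isOpen_waveRegion c).mem_nhds hp) fun q hq => by
      simp [fderiv_uEx_apply hc hq, mul_comm]
  rw [hux.fderiv_eq, ((hasFDerivAt_exp_phase c p).const_mul c).fderiv, fderiv_uEx_apply hc hp]
  have hc2 : c * c = 1 := by rcases hc with rfl | rfl <;> norm_num
  simp only [smul_apply, add_apply,
    ContinuousLinearMap.coe_fst', ContinuousLinearMap.coe_snd', smul_eq_mul]
  linear_combination Real.exp (c * p.1 + p.2 - 1) * hc2

/-- Near a boundary point of the `c`-wave the other wave is off, since there `-c x + t ≈ 2 t - 1 < 1`. -/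
lemma eventually_mem_waveRegion {c : ℝ} (hc : c = 1 ∨ c = -1) {x₀ t : ℝ} (ht : t < 1)
    (hx₀ : c * x₀ + t = 1) :
    ∀ᶠ q in 𝓝[{q : ℝ × ℝ | 0 < uEx q ∧ q.2 < 1}] (x₀, t), q ∈ waveRegion c := by
  have hoff : ∀ᶠ q : ℝ × ℝ in 𝓝 (x₀, t), -c * q.1 + q.2 < 1 :=
    (isOpen_lt (by fun_prop) continuous_const).mem_nhds (show -c * x₀ + t < 1 by linarith)
  filter_upwards [nhdsWithin_le_nhds hoff, self_mem_nhdsWithin] with q hq ⟨hu, hqt⟩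
  exact ⟨((uEx_pos_iff hc q).mp hu).resolve_right hq.not_gt, hqt⟩

lemma tendsto_abs_fderiv_uEx {c : ℝ} (hc : c = 1 ∨ c = -1) {x₀ t : ℝ} (ht : t < 1)
    (hx₀ : c * x₀ + t = 1) :
    Tendsto (fun p : ℝ × ℝ => |fderiv ℝ uEx p (1, 0)|)
      (𝓝[{p : ℝ × ℝ | 0 < uEx p ∧ p.2 < 1}] (x₀, t)) (𝓝 1) := by
  have hlim : Tendsto (fun q : ℝ × ℝ => Real.exp (c * q.1 + q.2 - 1)) (𝓝 (x₀, t)) (𝓝 1) := by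
    have := ((hasFDerivAt_exp_phase c (x₀, t)).continuousAt).tendsto
    simpa [hx₀] using this
  refine (hlim.mono_left nhdsWithin_le_nhds).congr' ?_
  filter_upwards [eventually_mem_waveRegion hc ht hx₀] with q hq
  have habs : |c| = 1 := by rcases hc with rfl | rfl <;> norm_num
  simp [fderiv_uEx_apply hc hq, abs_mul, habs]

/-- Example: colliding traveling waves: for every `t ∈ [0,1)`,
(a) `{x+t>1}` and `{-x+t>1}` are disjoint, `u(·,t) ≥ 0` and
`{u(·,t) > 0} = {x > 1-t} ∪ {x < t-1}`; (b) `u` is `C^∞` on `{u>0} ∩ {0<t<1}` and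
solves the heat equation `∂ₓₓu - ∂ₜu = 0` there; (c) at each free boundary point
`x₀ = ±(1-t)`, `t ∈ (0,1)`, the limit of `|∂ₓu|` from within `{u>0}` equals `1`. -/
theorem statement12 :
    (∀ t ∈ Set.Ico (0 : ℝ) 1,
      Disjoint {x : ℝ | 1 < x + t} {x : ℝ | 1 < -x + t} ∧
      (∀ x : ℝ, 0 ≤ uEx (x, t)) ∧
      {x : ℝ | 0 < uEx (x, t)} = {x : ℝ | 1 - t < x} ∪ {x : ℝ | x < t - 1}) ∧
    (ContDiffOn ℝ (⊤ : ℕ∞) uEx DEx ∧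
      ∀ p ∈ DEx,
        fderiv ℝ (fun q : ℝ × ℝ => fderiv ℝ uEx q (1, 0)) p (1, 0) -
          fderiv ℝ uEx p (0, 1) = 0) ∧
    (∀ t ∈ Set.Ioo (0 : ℝ) 1, ∀ x₀ : ℝ, (x₀ = 1 - t ∨ x₀ = -(1 - t)) →
      Tendsto (fun p : ℝ × ℝ => |fderiv ℝ uEx p (1, 0)|)
        (𝓝[{p : ℝ × ℝ | 0 < uEx p ∧ p.2 < 1}] (x₀, t)) (𝓝 1)) := by
  refine ⟨fun t ht => ⟨?_, fun x => uEx_nonneg _, ?_⟩, ⟨?_, ?_⟩, ?_⟩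
  · exact Set.disjoint_left.mpr fun x h₁ h₂ => by simp only [mem_ofPred_eq] at h₁ h₂; linarith [ht.2]
  · ext x
    simp only [mem_ofPred_eq, mem_union, uEx_pos_iff (Or.inl rfl)]
    constructor <;> rintro (h | h) <;> [left; right; left; right] <;> linarith
  · intro p hp
    obtain ⟨c, hc, hpc⟩ := exists_mem_waveRegion hp.1 hp.2.2
    exact ((contDiff_wave c).contDiffAt.congr_of_eventuallyEq
      (uEx_eventuallyEq_wave hc hpc)).contDiffWithinAt
  · intro p hp
    obtain ⟨c, hc, hpc⟩ := exists_mem_waveRegion hp.1 hp.2.2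
    exact heat_equation_uEx hc hpc
  · rintro t ⟨-, ht⟩ x₀ (rfl | rfl)
    · exact tendsto_abs_fderiv_uEx (Or.inl rfl) ht (by ring)
    · exact tendsto_abs_fderiv_uEx (Or.inr rfl) ht (by ring)

end ParabolicBernoulli
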